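/- Let X be a complex Banach space and A₁, A₂, A₃ positive operators on X with the same domain D ⊆ X. Suppose C ∈ L(X) is the inverse of A₁ − A₃ (i.e., for every y ∈ X, Cy ∈ D and A₁(Cy) − A₃(Cy) = y, and C(A₁x − A₃x) = x for all x ∈ D) and that C commutes with (s+A₃)^{-1} for every s ≥ 0. Define Λ₃ on X × X × X with domain D × D × D by Λ₃(u,v,w) = (A₁u, A₂v, u + A₃w). Then: (1) for every s ≥ 0, s + Λ₃ : D × D × D → X × X × X is bijective with bounded inverse given by (x,y,z) ↦ ((s+A₁)^{-1}x, (s+A₂)^{-1}y, −(s+A₁)^{-1}(s+A₃)^{-1}x + (s+A₃)^{-1}z), and Λ₃ is a positive operator on X × X × X; (2) for every α ∈ (0,1), the Balakrishnan integral Λ₃^{-α} = (sin(πα)/π) ∫₀^∞ s^{-α}(s+Λ₃)^{-1} ds satisfies Λ₃^{-α}(x,y,z) = ( A₁^{-α}x, A₂^{-α}y, C(A₁^{-α}x − A₃^{-α}x) + A₃^{-α}z ) for all (x,y,z) ∈ X × X × X, where Aᵢ^{-α} = (sin(πα)/π) ∫₀^∞ s^{-α}(s+Aᵢ)^{-1}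 ds. -/

import Mathlib

/-!
`C = (A₁ - A₃)⁻¹` commutes with the resolvents of `A₃`, hence with `A₃`, hence with
`A₁ = A₃ + C⁻¹` and with the resolvents of `A₁`. Applying `C` to the second resolvent identity
`(s+A₁)⁻¹ - (s+A₃)⁻¹ = (s+A₁)⁻¹ (A₃ - A₁) (s+A₃)⁻¹` gives
`(s+A₁)⁻¹ (s+A₃)⁻¹ = C ((s+A₃)⁻¹ - (s+A₁)⁻¹) = (s+A₃)⁻¹ (s+A₁)⁻¹`.
Commutativity makes the lower-triangular `invL3 s` a two-sided inverse of `s + Λ₃`, of norm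
`O(1/(1+s))`, and the product formula makes the off-diagonal entry of `invL3 s` linear in the
resolvents, so the Balakrishnan integral of `invL3` can be computed entry by entry.
-/

open MeasureTheory Real Set

noncomputable section

/-- `R` is a two-sided bounded inverse of `lam + A : D(A) → X`;
in particular `lam + A` is bijective from `D(A)` onto `X` with bounded inverse `R`. -/
def ResolventAt {X : Type*} [NormedAddCommGroup X] [NormedSpace ℂ X]
    (A : X →ₗ.[ℂ] X) (lam : ℂ) (R : X →L[ℂ] X) : Prop :=
  (∀ x : A.domain, R (lam • (x : X) + A x) = x) ∧
  (∀ y : X, ∃ h : R y ∈ A.domain, lam • R y + A ⟨R y, h⟩ = y)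

/-- `A` is a positive operator with constant `M ≥ 1` and resolvent family `R`. -/
structure IsPositive {X : Type*} [NormedAddCommGroup X] [NormedSpace ℂ X]
    (A : X →ₗ.[ℂ] X) (M : ℝ) (R : ℝ → X →L[ℂ] X) : Prop where
  dense_domain : Dense (A.domain : Set X)
  closed_graph : IsClosed (A.graph : Set (X × X))
  one_le : 1 ≤ M
  resolvent : ∀ s : ℝ, 0 ≤ s → ResolventAt A (s : ℂ) (R s)
  bound : ∀ s : ℝ, 0 ≤ s → (1 + s) * ‖R s‖ ≤ M

/-- The Balakrishnan fractional power `A ^ (-α)`, expressed through the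
resolvent family `R` of `A`:  `A⁻ᵅ = (sin (π α) / π) ∫₀^∞ s⁻ᵅ (s+A)⁻¹ ds`. -/
def negPow {X : Type*} [NormedAddCommGroup X] [NormedSpace ℂ X]
    (R : ℝ → X →L[ℂ] X) (α : ℝ) : X →L[ℂ] X :=
  (Real.sin (π * α) / π) • ∫ s in Ioi (0 : ℝ), s ^ (-α) • R s

/-- The bounded operator on `X × X × X` given by
`(x, y, z) ↦ ((s+A₁)⁻¹ x, (s+A₂)⁻¹ y, -(s+A₁)⁻¹(s+A₃)⁻¹ x + (s+A₃)⁻¹ z)`,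
i.e. the claimed inverse of `s + Λ₃`. -/
def invL3 {X : Type*} [NormedAddCommGroup X] [NormedSpace ℂ X]
    (R1 R2 R3 : ℝ → X →L[ℂ] X) (s : ℝ) : (X × X × X) →L[ℂ] (X × X × X) :=
  ((R1 s).comp (ContinuousLinearMap.fst ℂ X (X × X))).prod
    (((R2 s).comp ((ContinuousLinearMap.fst ℂ X X).comp
        (ContinuousLinearMap.snd ℂ X (X × X)))).prod
      (-((R1 s).comp ((R3 s).comp (ContinuousLinearMap.fst ℂ X (X × X)))) +
        (R3 s).comp ((ContinuousLinearMap.snd ℂ X X).comp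
          (ContinuousLinearMap.snd ℂ X (X × X)))))

namespace ResolventAt

variable {X : Type*} [NormedAddCommGroup X] [NormedSpace ℂ X]
  {A B : X →ₗ.[ℂ] X} {lam mu : ℂ} {R S T C : X →L[ℂ] X}

theorem mem (h : ResolventAt A lam R) (y : X) : R y ∈ A.domain := (h.2 y).fst

theorem apply_eq (h : ResolventAt A lam R) (y : X) (hy : R y ∈ A.domain) :
    lam • R y + A ⟨R y, hy⟩ = y :=
  (h.2 y).snd

theorem apply_add_apply (h : ResolventAt A lam R) (x : X) (hx : x ∈ A.domain) :
    R (lam • x + A ⟨x, hx⟩) = x :=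
  h.1 ⟨x, hx⟩

theorem sub_apply (hR : ResolventAt A lam R) (hS : ResolventAt B mu S) (y : X)
    (hy : S y ∈ A.domain) :
    R y - S y = R ((mu - lam) • S y + (B ⟨S y, hS.mem y⟩ - A ⟨S y, hy⟩)) := by
  have hSy := hS.apply_eq y (hS.mem y)
  calc R y - S y = R (y - (lam • S y + A ⟨S y, hy⟩)) := by rw [map_sub, hR.apply_add_apply]
    _ = R ((mu • S y + B ⟨S y, hS.mem y⟩) - (lam • S y + A ⟨S y, hy⟩)) := by rw [hSy]
    _ = R ((mu - lam) • S y + (B ⟨S y, hS.mem y⟩ - A ⟨S y, hy⟩)) := by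
      rw [sub_smul, add_sub_add_comm]

theorem sub_apply_of_eq (hR : ResolventAt A lam R) (hS : ResolventAt A mu S) (y : X) :
    R y - S y = (mu - lam) • R (S y) := by
  rw [hR.sub_apply hS y (hS.mem y), sub_self, add_zero, map_smul]

theorem apply_comm_of_comp_comm (h : ResolventAt A lam R) (hT : T.comp R = R.comp T)
    (x : X) (hx : x ∈ A.domain) : ∃ hTx : T x ∈ A.domain, A ⟨T x, hTx⟩ = T (A ⟨x, hx⟩) := by
  have hTx : T x = R (T (lam • x + A ⟨x, hx⟩)) := by
    conv_lhs => rw [← h.apply_add_apply x hx]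
    exact DFunLike.congr_fun hT _
  refine ⟨hTx ▸ h.mem _, ?_⟩
  calc A ⟨T x, _⟩ = A ⟨R _, h.mem _⟩ := congrArg A (Subtype.ext hTx)
    _ = T (lam • x + A ⟨x, hx⟩) - lam • R _ := eq_sub_of_add_eq' (h.apply_eq _ _)
    _ = T (A ⟨x, hx⟩) := by rw [← hTx, map_add, map_smul, add_sub_cancel_left]

theorem comp_comm_of_apply_comm (h : ResolventAt A lam R)
    (hT : ∀ (x : X) (hx : x ∈ A.domain), ∃ hTx : T x ∈ A.domain, A ⟨T x, hTx⟩ = T (A ⟨x, hx⟩)) :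
    T.comp R = R.comp T := by
  ext y
  obtain ⟨hTRy, hcomm⟩ := hT (R y) (h.mem y)
  calc T (R y) = R (lam • T (R y) + A ⟨T (R y), hTRy⟩) := (h.apply_add_apply _ _).symm
    _ = R (T y) := by rw [hcomm, ← map_smul, ← map_add, h.apply_eq]

theorem comp_comm_of_inverse_sub (hR : ResolventAt A lam R) (hS : ResolventAt B mu S)
    (hdom : A.domain ≤ B.domain)
    (ha : ∀ y : X, ∃ (hA : C y ∈ A.domain) (hB : C y ∈ B.domain), A ⟨C y, hA⟩ - B ⟨C y, hB⟩ = y)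
    (hb : ∀ (x : X) (hA : x ∈ A.domain) (hB : x ∈ B.domain), C (A ⟨x, hA⟩ - B ⟨x, hB⟩) = x)
    (hc : C.comp S = S.comp C) : C.comp R = R.comp C := by
  refine hR.comp_comm_of_apply_comm fun x hxA => ?_
  have hxB := hdom hxA
  obtain ⟨hCA, hCB, hCx⟩ := ha x
  obtain ⟨_, hBC⟩ := hS.apply_comm_of_comp_comm hc x hxB
  have hCAx := hb x hxA hxB
  rw [map_sub, sub_eq_iff_eq_add'] at hCAx
  refine ⟨hCA, ?_⟩
  rw [sub_eq_iff_eq_add'.mp hCx, hCAx, hBC]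

theorem apply_apply_eq_of_inverse_sub (hR : ResolventAt A lam R) (hS : ResolventAt B lam S)
    (hdom : B.domain ≤ A.domain)
    (hb : ∀ (x : X) (hA : x ∈ A.domain) (hB : x ∈ B.domain), C (A ⟨x, hA⟩ - B ⟨x, hB⟩) = x)
    (hc : C.comp R = R.comp C) (y : X) : R (S y) = C (S y - R y) := by
  have hy : S y ∈ A.domain := hdom (hS.mem y)
  have hdiff := hR.sub_apply hS y hy
  rw [sub_self, zero_smul, zero_add] at hdiff
  calc R (S y) = R (C (A ⟨S y, hy⟩ - B ⟨S y, hS.mem y⟩)) := by rw [hb]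
    _ = C (R (A ⟨S y, hy⟩ - B ⟨S y, hS.mem y⟩)) := (DFunLike.congr_fun hc _).symm
    _ = C (S y - R y) := by rw [← neg_sub (R y), hdiff, ← map_neg, neg_sub]

theorem apply_apply_comm_of_inverse_sub (hR : ResolventAt A lam R) (hS : ResolventAt B lam S)
    (hdom : A.domain = B.domain)
    (ha : ∀ y : X, ∃ (hA : C y ∈ A.domain) (hB : C y ∈ B.domain), A ⟨C y, hA⟩ - B ⟨C y, hB⟩ = y)
    (hb : ∀ (x : X) (hA : x ∈ A.domain) (hB : x ∈ B.domain), C (A ⟨x, hA⟩ - B ⟨x, hB⟩) = x)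
    (hc : C.comp S = S.comp C) (y : X) : R (S y) = S (R y) := by
  -- `-C` inverts `B - A`, so `apply_apply_eq_of_inverse_sub` also applies with `A`, `B` swapped.
  have hb' : ∀ (x : X) (hB : x ∈ B.domain) (hA : x ∈ A.domain),
      (-C) (B ⟨x, hB⟩ - A ⟨x, hA⟩) = x :=
    fun x hB hA => by rw [neg_apply, ← map_neg, neg_sub, hb]
  have hc' : (-C).comp S = S.comp (-C) := by
    rw [ContinuousLinearMap.neg_comp, ContinuousLinearMap.comp_neg, hc]
  have hcR := hR.comp_comm_of_inverse_sub hS hdom.le ha hb hc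
  rw [hR.apply_apply_eq_of_inverse_sub hS hdom.ge hb hcR,
    hS.apply_apply_eq_of_inverse_sub hR hdom.le hb' hc', neg_apply, ← map_neg, neg_sub]

end ResolventAt

namespace IsPositive

variable {X : Type*} [NormedAddCommGroup X] [NormedSpace ℂ X]
  {A : X →ₗ.[ℂ] X} {M : ℝ} {R : ℝ → X →L[ℂ] X}

theorem norm_le (h : IsPositive A M R) {s : ℝ} (hs : 0 ≤ s) : ‖R s‖ ≤ M :=
  le_trans (le_mul_of_one_le_left (norm_nonneg _) (by linarith)) (h.bound s hs)

theorem norm_sub_le (h : IsPositive A M R) {s t : ℝ} (hs : 0 ≤ s) (ht : 0 ≤ t) :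
    ‖R s - R t‖ ≤ M ^ 2 * |s - t| := by
  have hid : R s - R t = ((t : ℂ) - s) • (R s).comp (R t) := by
    ext y
    exact (h.resolvent s hs).sub_apply_of_eq (h.resolvent t ht) y
  calc ‖R s - R t‖ ≤ ‖(t : ℂ) - s‖ * (‖R s‖ * ‖R t‖) := by
        rw [hid]
        exact (norm_smul_le _ _).trans
          (mul_le_mul_of_nonneg_left ((R s).opNorm_comp_le (R t)) (norm_nonneg _))
    _ ≤ |s - t| * (M * M) := by
        rw [← Complex.ofReal_sub, Complex.norm_real, Real.norm_eq_abs, abs_sub_comm]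
        gcongr
        · exact (norm_nonneg _).trans (h.norm_le hs)
        · exact h.norm_le hs
        · exact h.norm_le ht
    _ = M ^ 2 * |s - t| := by ring

theorem continuousOn (h : IsPositive A M R) : ContinuousOn R (Ici 0) := by
  refine (LipschitzOnWith.of_dist_le_mul (K := (M ^ 2).toNNReal) fun s hs t ht => ?_).continuousOn
  rw [dist_eq_norm, Real.dist_eq, Real.coe_toNNReal _ (sq_nonneg M)]
  exact h.norm_sub_le hs ht

end IsPositive

theorem integrableOn_rpow_neg_div_one_add {α : ℝ} (hα : α ∈ Ioo (0 : ℝ) 1) :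
    IntegrableOn (fun s : ℝ => s ^ (-α) / (1 + s)) (Ioi 0) := by
  have hmeas : ∀ t ⊆ Ioi (0 : ℝ), MeasurableSet t →
      AEStronglyMeasurable (fun s : ℝ => s ^ (-α) / (1 + s)) (volume.restrict t) := by
    refine fun t ht hmt => (ContinuousOn.mono ?_ ht).aestronglyMeasurable hmt
    exact (continuousOn_id.rpow_const fun s hs => Or.inl (ne_of_gt hs)).div
      (by fun_prop) fun s hs => by linarith [mem_Ioi.mp hs]
  have hIoc : IntegrableOn (fun s : ℝ => s ^ (-α) / (1 + s)) (Ioc 0 1) := by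
    refine Integrable.mono' ((intervalIntegrable_iff_integrableOn_Ioc_of_le zero_le_one).mp
      (intervalIntegral.intervalIntegrable_rpow' (r := -α) (by linarith [hα.2])))
      (hmeas _ Ioc_subset_Ioi_self measurableSet_Ioc) ?_
    filter_upwards [ae_restrict_mem measurableSet_Ioc] with s hs
    have hpow := Real.rpow_nonneg hs.1.le (-α)
    rw [Real.norm_of_nonneg (div_nonneg hpow (by linarith [hs.1]))]
    exact div_le_self hpow (by linarith [hs.1])
  have hIoi : IntegrableOn (fun s : ℝ => s ^ (-α) / (1 + s)) (Ioi 1) := by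
    refine Integrable.mono' (integrableOn_Ioi_rpow_of_lt (a := -α - 1) (by linarith [hα.1]) one_pos)
      (hmeas _ (Ioi_subset_Ioi zero_le_one) measurableSet_Ioi) ?_
    filter_upwards [ae_restrict_mem measurableSet_Ioi] with s (hs : 1 < s)
    have hs0 : 0 < s := one_pos.trans hs
    have hpow := Real.rpow_nonneg hs0.le (-α)
    rw [Real.norm_of_nonneg (div_nonneg hpow (by linarith)), Real.rpow_sub_one hs0.ne']
    exact div_le_div_of_nonneg_left (by positivity) hs0 (by linarith)
  rw [← Ioc_union_Ioi_eq_Ioi zero_le_one]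
  exact hIoc.union hIoi

theorem integrableOn_rpow_neg_smul {E : Type*} [NormedAddCommGroup E] [NormedSpace ℝ E]
    {F : ℝ → E} {K α : ℝ} (hF : ContinuousOn F (Ici 0))
    (hb : ∀ s : ℝ, 0 ≤ s → (1 + s) * ‖F s‖ ≤ K) (hα : α ∈ Ioo (0 : ℝ) 1) :
    IntegrableOn (fun s : ℝ => s ^ (-α) • F s) (Ioi 0) := by
  have hcont : ContinuousOn (fun s : ℝ => s ^ (-α) • F s) (Ioi 0) :=
    (continuousOn_id.rpow_const fun s hs => Or.inl (ne_of_gt hs)).smul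
      (hF.mono Ioi_subset_Ici_self)
  refine Integrable.mono' ((integrableOn_rpow_neg_div_one_add hα).const_mul K)
    (hcont.aestronglyMeasurable measurableSet_Ioi) ?_
  filter_upwards [ae_restrict_mem measurableSet_Ioi] with s (hs : 0 < s)
  have hpow := Real.rpow_nonneg hs.le (-α)
  have h1s : 0 < 1 + s := by linarith
  calc ‖s ^ (-α) • F s‖ = s ^ (-α) * ((1 + s) * ‖F s‖) / (1 + s) := by
        rw [norm_smul, Real.norm_of_nonneg hpow]
        field_simp
    _ ≤ s ^ (-α) * K / (1 + s) := by gcongr; exact hb s hs.le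
    _ = K * (s ^ (-α) / (1 + s)) := by ring

theorem IsPositive.integrableOn_rpow_neg_smul {X : Type*} [NormedAddCommGroup X]
    [NormedSpace ℂ X] {A : X →ₗ.[ℂ] X} {M α : ℝ} {R : ℝ → X →L[ℂ] X} (h : IsPositive A M R)
    (hα : α ∈ Ioo (0 : ℝ) 1) : IntegrableOn (fun s : ℝ => s ^ (-α) • R s) (Ioi 0) :=
  _root_.integrableOn_rpow_neg_smul h.continuousOn h.bound hα

theorem negPow_apply {X : Type*} [NormedAddCommGroup X] [NormedSpace ℂ X]
    {R : ℝ → X →L[ℂ] X} {α : ℝ} (hI : IntegrableOn (fun s : ℝ => s ^ (-α) • R s) (Ioi 0))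
    (x : X) : negPow R α x = (Real.sin (π * α) / π) • ∫ s in Ioi (0 : ℝ), s ^ (-α) • R s x := by
  rw [negPow, FunLike.coe_smul, Pi.smul_apply, ContinuousLinearMap.integral_apply hI]
  rfl

theorem LinearPMap.mem_graph_iff_exists {R E F : Type*} [Ring R] [AddCommGroup E] [Module R E]
    [AddCommGroup F] [Module R F] {f : E →ₗ.[R] F} {x : E} {y : F} :
    (x, y) ∈ f.graph ↔ ∃ hx : x ∈ f.domain, f ⟨x, hx⟩ = y := by
  simp

@[fun_prop]
theorem ContinuousOn.clm_prod {α 𝕜 E F G : Type*} [TopologicalSpace α]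
    [NontriviallyNormedField 𝕜] [NormedAddCommGroup E] [NormedSpace 𝕜 E]
    [NormedAddCommGroup F] [NormedSpace 𝕜 F] [NormedAddCommGroup G] [NormedSpace 𝕜 G]
    {f : α → E →L[𝕜] F} {g : α → E →L[𝕜] G} {S : Set α}
    (hf : ContinuousOn f S) (hg : ContinuousOn g S) :
    ContinuousOn (fun t => (f t).prod (g t)) S :=
  (ContinuousLinearMap.prodₗᵢ 𝕜).continuous.comp_continuousOn (hf.prodMk hg)

section Lambda3

variable {X : Type*} [NormedAddCommGroup X] [NormedSpace ℂ X]
  {A₁ A₂ A₃ : X →ₗ.[ℂ] X} {R1 R2 R3 : ℝ → X →L[ℂ] X} {M₁ M₂ M₃ α : ℝ}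

@[simp]
theorem invL3_apply (s : ℝ) (p : X × X × X) :
    invL3 R1 R2 R3 s p = (R1 s p.1, R2 s p.2.1, -R1 s (R3 s p.1) + R3 s p.2.2) :=
  rfl

theorem invL3_left_inv {s : ℝ} (h₁ : ResolventAt A₁ s (R1 s)) (h₂ : ResolventAt A₂ s (R2 s))
    (h₃ : ResolventAt A₃ s (R3 s)) (hswap : ∀ x, R1 s (R3 s x) = R3 s (R1 s x))
    (u v w : X) (hu : u ∈ A₁.domain) (hv : v ∈ A₂.domain) (hw : w ∈ A₃.domain) :
    invL3 R1 R2 R3 s ((s : ℂ) • u + A₁ ⟨u, hu⟩, (s : ℂ) • v + A₂ ⟨v, hv⟩,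
      u + ((s : ℂ) • w + A₃ ⟨w, hw⟩)) = (u, v, w) := by
  rw [invL3_apply, hswap, h₁.apply_add_apply, h₂.apply_add_apply, map_add, h₃.apply_add_apply,
    neg_add_cancel_left]

theorem invL3_right_inv {s : ℝ} (h₁ : ResolventAt A₁ s (R1 s)) (h₂ : ResolventAt A₂ s (R2 s))
    (h₃ : ResolventAt A₃ s (R3 s)) (hswap : ∀ x, R1 s (R3 s x) = R3 s (R1 s x))
    (p : X × X × X) :
    ∃ (h1 : (R1 s) p.1 ∈ A₁.domain) (h2 : (R2 s) p.2.1 ∈ A₂.domain)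
      (h3 : -(R1 s) ((R3 s) p.1) + (R3 s) p.2.2 ∈ A₃.domain),
      (s : ℂ) • (R1 s) p.1 + A₁ ⟨(R1 s) p.1, h1⟩ = p.1 ∧
      (s : ℂ) • (R2 s) p.2.1 + A₂ ⟨(R2 s) p.2.1, h2⟩ = p.2.1 ∧
      (R1 s) p.1 + ((s : ℂ) • (-(R1 s) ((R3 s) p.1) + (R3 s) p.2.2) +
        A₃ ⟨-(R1 s) ((R3 s) p.1) + (R3 s) p.2.2, h3⟩) = p.2.2 := by
  have h31 : R3 s (R1 s p.1) ∈ A₃.domain := h₃.mem _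
  have h3 : -(R1 s) ((R3 s) p.1) + (R3 s) p.2.2 ∈ A₃.domain := by
    rw [hswap]
    exact A₃.domain.add_mem (A₃.domain.neg_mem h31) (h₃.mem _)
  refine ⟨h₁.mem _, h₂.mem _, h3, h₁.apply_eq _ _, h₂.apply_eq _ _, ?_⟩
  have hsplit : A₃ ⟨-(R1 s) ((R3 s) p.1) + (R3 s) p.2.2, h3⟩
      = -A₃ ⟨R3 s (R1 s p.1), h31⟩ + A₃ ⟨R3 s p.2.2, h₃.mem _⟩ := by
    rw [← A₃.map_neg, ← A₃.map_add]
    exact congrArg A₃ (Subtype.ext (by simp [hswap]))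
  rw [hsplit, eq_sub_of_add_eq' (h₃.apply_eq _ _), eq_sub_of_add_eq' (h₃.apply_eq _ _), hswap]
  module

theorem norm_invL3_le (s : ℝ) :
    ‖invL3 R1 R2 R3 s‖ ≤ max ‖R1 s‖ (max ‖R2 s‖ (‖R1 s‖ * ‖R3 s‖ + ‖R3 s‖)) := by
  refine ContinuousLinearMap.opNorm_le_bound _ (by positivity) fun p => ?_
  have hp1 : ‖p.1‖ ≤ ‖p‖ := norm_fst_le p
  have hp21 : ‖p.2.1‖ ≤ ‖p‖ := (norm_fst_le p.2).trans (norm_snd_le p)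
  have hp22 : ‖p.2.2‖ ≤ ‖p‖ := (norm_snd_le p.2).trans (norm_snd_le p)
  rw [invL3_apply, Prod.norm_def, Prod.norm_def, max_mul_of_nonneg _ _ (norm_nonneg p),
    max_mul_of_nonneg _ _ (norm_nonneg p)]
  refine max_le_max ((R1 s).le_opNorm_of_le hp1) (max_le_max ((R2 s).le_opNorm_of_le hp21) ?_)
  calc ‖-R1 s (R3 s p.1) + R3 s p.2.2‖ ≤ ‖R1 s (R3 s p.1)‖ + ‖R3 s p.2.2‖ :=
        (norm_add_le _ _).trans_eq (by rw [norm_neg])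
    _ ≤ ‖R1 s‖ * (‖R3 s‖ * ‖p‖) + ‖R3 s‖ * ‖p‖ := by
      gcongr
      · exact (R1 s).le_opNorm_of_le ((R3 s).le_opNorm_of_le hp1)
      · exact (R3 s).le_opNorm_of_le hp22
    _ = (‖R1 s‖ * ‖R3 s‖ + ‖R3 s‖) * ‖p‖ := by ring

theorem one_add_mul_norm_invL3_le {s : ℝ} (hA₁ : IsPositive A₁ M₁ R1)
    (hA₂ : IsPositive A₂ M₂ R2) (hA₃ : IsPositive A₃ M₃ R3) (hs : 0 ≤ s) :
    (1 + s) * ‖invL3 R1 R2 R3 s‖ ≤ max M₁ (max M₂ (M₁ * M₃ + M₃)) := by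
  have h1s : 0 ≤ 1 + s := by linarith
  refine (mul_le_mul_of_nonneg_left (norm_invL3_le s) h1s).trans ?_
  rw [mul_max_of_nonneg _ _ h1s, mul_max_of_nonneg _ _ h1s]
  refine max_le_max (hA₁.bound s hs) (max_le_max (hA₂.bound s hs) ?_)
  calc (1 + s) * (‖R1 s‖ * ‖R3 s‖ + ‖R3 s‖) = (‖R1 s‖ + 1) * ((1 + s) * ‖R3 s‖) := by ring
    _ ≤ (M₁ + 1) * M₃ := by
      gcongr
      · linarith [hA₁.one_le]
      · exact hA₁.norm_le hs
      · exact hA₃.bound s hs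
    _ = M₁ * M₃ + M₃ := by ring

theorem continuousOn_invL3 {S : Set ℝ} (h₁ : ContinuousOn R1 S) (h₂ : ContinuousOn R2 S)
    (h₃ : ContinuousOn R3 S) : ContinuousOn (invL3 R1 R2 R3) S := by
  unfold invL3
  fun_prop

theorem isClosed_graph_Λ3 (h₁ : IsClosed (A₁.graph : Set (X × X)))
    (h₂ : IsClosed (A₂.graph : Set (X × X))) (h₃ : IsClosed (A₃.graph : Set (X × X))) :
    IsClosed {q : (X × X × X) × (X × X × X) |
      ∃ (hu : q.1.1 ∈ A₁.domain) (hv : q.1.2.1 ∈ A₂.domain) (hw : q.1.2.2 ∈ A₃.domain),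
        q.2 = (A₁ ⟨q.1.1, hu⟩, A₂ ⟨q.1.2.1, hv⟩, q.1.1 + A₃ ⟨q.1.2.2, hw⟩)} := by
  have hset : {q : (X × X × X) × (X × X × X) |
      ∃ (hu : q.1.1 ∈ A₁.domain) (hv : q.1.2.1 ∈ A₂.domain) (hw : q.1.2.2 ∈ A₃.domain),
        q.2 = (A₁ ⟨q.1.1, hu⟩, A₂ ⟨q.1.2.1, hv⟩, q.1.1 + A₃ ⟨q.1.2.2, hw⟩)} =
      {q | (q.1.1, q.2.1) ∈ A₁.graph} ∩ {q | (q.1.2.1, q.2.2.1) ∈ A₂.graph} ∩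
        {q | (q.1.2.2, q.2.2.2 - q.1.1) ∈ A₃.graph} := by
    ext ⟨⟨u, v, w⟩, ⟨x, y, z⟩⟩
    simp only [mem_ofPred_eq, mem_inter_iff, LinearPMap.mem_graph_iff_exists, Prod.mk.injEq,
      eq_sub_iff_add_eq']
    constructor
    · rintro ⟨hu, hv, hw, hx, hy, hz⟩
      exact ⟨⟨⟨hu, hx.symm⟩, hv, hy.symm⟩, hw, hz.symm⟩
    · rintro ⟨⟨⟨hu, hx⟩, hv, hy⟩, hw, hz⟩
      exact ⟨hu, hv, hw, hx.symm, hy.symm, hz.symm⟩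
  rw [hset]
  exact ((h₁.preimage (by fun_prop)).inter (h₂.preimage (by fun_prop))).inter
    (h₃.preimage (by fun_prop))

theorem integrableOn_rpow_neg_smul_invL3 (hA₁ : IsPositive A₁ M₁ R1)
    (hA₂ : IsPositive A₂ M₂ R2) (hA₃ : IsPositive A₃ M₃ R3) (hα : α ∈ Ioo (0 : ℝ) 1) :
    IntegrableOn (fun s : ℝ => s ^ (-α) • invL3 R1 R2 R3 s) (Ioi 0) :=
  integrableOn_rpow_neg_smul
    (continuousOn_invL3 hA₁.continuousOn hA₂.continuousOn hA₃.continuousOn)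
    (fun _ hs => one_add_mul_norm_invL3_le hA₁ hA₂ hA₃ hs) hα

theorem negPow_invL3_apply [CompleteSpace X] {C : X →L[ℂ] X} (hA₁ : IsPositive A₁ M₁ R1)
    (hA₂ : IsPositive A₂ M₂ R2) (hA₃ : IsPositive A₃ M₃ R3)
    (hR13 : ∀ s : ℝ, 0 ≤ s → ∀ x, R1 s (R3 s x) = C (R3 s x - R1 s x))
    (hα : α ∈ Ioo (0 : ℝ) 1) (p : X × X × X) :
    negPow (invL3 R1 R2 R3) α p = (negPow R1 α p.1, negPow R2 α p.2.1,
      C (negPow R1 α p.1 - negPow R3 α p.1) + negPow R3 α p.2.2) := by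
  have hI₁ := hA₁.integrableOn_rpow_neg_smul hα
  have hI₂ := hA₂.integrableOn_rpow_neg_smul hα
  have hI₃ := hA₃.integrableOn_rpow_neg_smul hα
  have hpt : EqOn (fun s : ℝ => s ^ (-α) • invL3 R1 R2 R3 s p)
      (fun s : ℝ => (s ^ (-α) • R1 s p.1, s ^ (-α) • R2 s p.2.1,
        C (s ^ (-α) • R1 s p.1 - s ^ (-α) • R3 s p.1) + s ^ (-α) • R3 s p.2.2)) (Ioi 0) := by
    intro s (hs : 0 < s)
    simp only [invL3_apply, hR13 s hs.le, Prod.smul_mk, Prod.mk.injEq, true_and, map_sub,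
      C.map_smul_of_tower, smul_add, smul_sub, smul_neg]
    abel
  have hint : ∀ x : X, ∀ {R : ℝ → X →L[ℂ] X},
      IntegrableOn (fun s : ℝ => s ^ (-α) • R s) (Ioi 0) →
      IntegrableOn (fun s : ℝ => s ^ (-α) • R s x) (Ioi 0) :=
    fun x _ hI => hI.apply_continuousLinearMap x
  have hdiff : IntegrableOn (fun s : ℝ => s ^ (-α) • R1 s p.1 - s ^ (-α) • R3 s p.1) (Ioi 0) :=
    (hint p.1 hI₁).sub (hint p.1 hI₃)
  have hthird : IntegrableOn (fun s : ℝ =>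
      C (s ^ (-α) • R1 s p.1 - s ^ (-α) • R3 s p.1) + s ^ (-α) • R3 s p.2.2) (Ioi 0) :=
    (C.integrable_comp hdiff).add (hint p.2.2 hI₃)
  rw [negPow_apply (integrableOn_rpow_neg_smul_invL3 hA₁ hA₂ hA₃ hα),
    setIntegral_congr_fun measurableSet_Ioi hpt,
    integral_pair (hint p.1 hI₁) ((hint p.2.1 hI₂).prodMk hthird),
    integral_pair (hint p.2.1 hI₂) hthird,
    integral_add (C.integrable_comp hdiff) (hint p.2.2 hI₃), C.integral_comp_comm hdiff,
    integral_sub (hint p.1 hI₁) (hint p.1 hI₃),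
    negPow_apply hI₁, negPow_apply hI₂, negPow_apply hI₃, negPow_apply hI₃]
  simp only [Prod.smul_mk, smul_add, ← smul_sub, C.map_smul_of_tower]

end Lambda3

theorem stmt19_general {X : Type*} [NormedAddCommGroup X] [NormedSpace ℂ X] [CompleteSpace X]
    (M₁ M₂ M₃ : ℝ) (A₁ A₂ A₃ : X →ₗ.[ℂ] X) (R1 R2 R3 : ℝ → X →L[ℂ] X)
    (hA₁ : IsPositive A₁ M₁ R1) (hA₂ : IsPositive A₂ M₂ R2) (hA₃ : IsPositive A₃ M₃ R3)
    (hdom13 : A₁.domain = A₃.domain)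
    (C : X →L[ℂ] X)
    -- `C` maps into `D` and `(A₁ - A₃) ∘ C = I`
    (ha : ∀ y : X, ∃ (h1 : C y ∈ A₁.domain) (h3 : C y ∈ A₃.domain),
      A₁ ⟨C y, h1⟩ - A₃ ⟨C y, h3⟩ = y)
    -- `C ∘ (A₁ - A₃) = I` on `D`
    (hb : ∀ (x : X) (h1 : x ∈ A₁.domain) (h3 : x ∈ A₃.domain),
      C (A₁ ⟨x, h1⟩ - A₃ ⟨x, h3⟩) = x)
    -- `C` commutes with the resolvent of `A₃`
    (hc : ∀ s : ℝ, 0 ≤ s → C.comp (R3 s) = (R3 s).comp C) :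
    -- (1) `s + Λ₃` is bijective with bounded inverse `invL3 R1 R2 R3 s` ...
    (∀ s : ℝ, 0 ≤ s →
      (∀ (u v w : X) (hu : u ∈ A₁.domain) (hv : v ∈ A₂.domain) (hw : w ∈ A₃.domain),
        invL3 R1 R2 R3 s ((s : ℂ) • u + A₁ ⟨u, hu⟩, (s : ℂ) • v + A₂ ⟨v, hv⟩,
            u + ((s : ℂ) • w + A₃ ⟨w, hw⟩)) = (u, v, w)) ∧
      (∀ p : X × X × X,
        ∃ (h1 : (R1 s) p.1 ∈ A₁.domain) (h2 : (R2 s) p.2.1 ∈ A₂.domain)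
          (h3 : -(R1 s) ((R3 s) p.1) + (R3 s) p.2.2 ∈ A₃.domain),
          (s : ℂ) • (R1 s) p.1 + A₁ ⟨(R1 s) p.1, h1⟩ = p.1 ∧
          (s : ℂ) • (R2 s) p.2.1 + A₂ ⟨(R2 s) p.2.1, h2⟩ = p.2.1 ∧
          (R1 s) p.1 + ((s : ℂ) • (-(R1 s) ((R3 s) p.1) + (R3 s) p.2.2) +
            A₃ ⟨-(R1 s) ((R3 s) p.1) + (R3 s) p.2.2, h3⟩) = p.2.2)) ∧
    -- ... and `Λ₃` is a positive operator on `X × X × X`: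
    Dense {p : X × X × X | p.1 ∈ A₁.domain ∧ p.2.1 ∈ A₂.domain ∧ p.2.2 ∈ A₃.domain} ∧
    IsClosed {q : (X × X × X) × (X × X × X) |
      ∃ (hu : q.1.1 ∈ A₁.domain) (hv : q.1.2.1 ∈ A₂.domain) (hw : q.1.2.2 ∈ A₃.domain),
        q.2 = (A₁ ⟨q.1.1, hu⟩, A₂ ⟨q.1.2.1, hv⟩, q.1.1 + A₃ ⟨q.1.2.2, hw⟩)} ∧
    (∃ M' : ℝ, 1 ≤ M' ∧ ∀ s : ℝ, 0 ≤ s → (1 + s) * ‖invL3 R1 R2 R3 s‖ ≤ M') ∧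
    -- (2) the fractional powers of `Λ₃`:
    (∀ α : ℝ, α ∈ Ioo (0 : ℝ) 1 →
      IntegrableOn (fun s : ℝ => s ^ (-α) • invL3 R1 R2 R3 s) (Ioi 0) ∧
      ∀ p : X × X × X,
        ((Real.sin (π * α) / π) • ∫ s in Ioi (0 : ℝ), s ^ (-α) • invL3 R1 R2 R3 s) p
          = (negPow R1 α p.1, negPow R2 α p.2.1,
              C (negPow R1 α p.1 - negPow R3 α p.1) + negPow R3 α p.2.2)) := by
  have hC₁ : ∀ s : ℝ, 0 ≤ s → C.comp (R1 s) = (R1 s).comp C := fun s hs =>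
    (hA₁.resolvent s hs).comp_comm_of_inverse_sub (hA₃.resolvent s hs) hdom13.le ha hb (hc s hs)
  have hR13 : ∀ s : ℝ, 0 ≤ s → ∀ x, R1 s (R3 s x) = C (R3 s x - R1 s x) := fun s hs =>
    (hA₁.resolvent s hs).apply_apply_eq_of_inverse_sub (hA₃.resolvent s hs) hdom13.ge hb (hC₁ s hs)
  have hswap : ∀ s : ℝ, 0 ≤ s → ∀ x, R1 s (R3 s x) = R3 s (R1 s x) := fun s hs =>
    (hA₁.resolvent s hs).apply_apply_comm_of_inverse_sub (hA₃.resolvent s hs) hdom13 ha hb (hc s hs)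
  refine ⟨fun s hs => ⟨?_, ?_⟩, hA₁.dense_domain.prod (hA₂.dense_domain.prod hA₃.dense_domain),
    isClosed_graph_Λ3 hA₁.closed_graph hA₂.closed_graph hA₃.closed_graph,
    ⟨_, le_max_of_le_left hA₁.one_le, fun s hs => one_add_mul_norm_invL3_le hA₁ hA₂ hA₃ hs⟩,
    fun α hα => ⟨integrableOn_rpow_neg_smul_invL3 hA₁ hA₂ hA₃ hα,
      negPow_invL3_apply hA₁ hA₂ hA₃ hR13 hα⟩⟩
  · exact invL3_left_inv (hA₁.resolvent s hs) (hA₂.resolvent s hs) (hA₃.resolvent s hs)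
      (hswap s hs)
  · exact invL3_right_inv (hA₁.resolvent s hs) (hA₂.resolvent s hs) (hA₃.resolvent s hs)
      (hswap s hs)

/-- for positive operators `A₁, A₂, A₃` with common domain `D`, with
`C = (A₁ - A₃)⁻¹` commuting with the resolvent of `A₃`, the operator
`Λ₃(u,v,w) = (A₁u, A₂v, u + A₃w)` on `D × D × D` satisfies:
(1) for `s ≥ 0`, `s + Λ₃` is bijective with bounded inverse `invL3 R1 R2 R3 s`,
and `Λ₃` is a positive operator on `X × X × X` (dense domain, closed graph,
uniform resolvent bound); (2) for `α ∈ (0,1)`,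
`Λ₃⁻ᵅ (x,y,z) = (A₁⁻ᵅ x, A₂⁻ᵅ y, C (A₁⁻ᵅ x - A₃⁻ᵅ x) + A₃⁻ᵅ z)`. -/
theorem stmt19 {X : Type*} [NormedAddCommGroup X] [NormedSpace ℂ X] [CompleteSpace X]
    (M₁ M₂ M₃ : ℝ) (A₁ A₂ A₃ : X →ₗ.[ℂ] X) (R1 R2 R3 : ℝ → X →L[ℂ] X)
    (hA₁ : IsPositive A₁ M₁ R1) (hA₂ : IsPositive A₂ M₂ R2) (hA₃ : IsPositive A₃ M₃ R3)
    (hdom12 : A₁.domain = A₂.domain) (hdom13 : A₁.domain = A₃.domain)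
    (C : X →L[ℂ] X)
    -- `C` maps into `D` and `(A₁ - A₃) ∘ C = I`
    (ha : ∀ y : X, ∃ (h1 : C y ∈ A₁.domain) (h3 : C y ∈ A₃.domain),
      A₁ ⟨C y, h1⟩ - A₃ ⟨C y, h3⟩ = y)
    -- `C ∘ (A₁ - A₃) = I` on `D`
    (hb : ∀ (x : X) (h1 : x ∈ A₁.domain) (h3 : x ∈ A₃.domain),
      C (A₁ ⟨x, h1⟩ - A₃ ⟨x, h3⟩) = x)
    -- `C` commutes with the resolvent of `A₃`
    (hc : ∀ s : ℝ, 0 ≤ s → C.comp (R3 s) = (R3 s).comp C) :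
    -- (1) `s + Λ₃` is bijective with bounded inverse `invL3 R1 R2 R3 s` ...
    (∀ s : ℝ, 0 ≤ s →
      (∀ (u v w : X) (hu : u ∈ A₁.domain) (hv : v ∈ A₂.domain) (hw : w ∈ A₃.domain),
        invL3 R1 R2 R3 s ((s : ℂ) • u + A₁ ⟨u, hu⟩, (s : ℂ) • v + A₂ ⟨v, hv⟩,
            u + ((s : ℂ) • w + A₃ ⟨w, hw⟩)) = (u, v, w)) ∧
      (∀ p : X × X × X,
        ∃ (h1 : (R1 s) p.1 ∈ A₁.domain) (h2 : (R2 s) p.2.1 ∈ A₂.domain)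
          (h3 : -(R1 s) ((R3 s) p.1) + (R3 s) p.2.2 ∈ A₃.domain),
          (s : ℂ) • (R1 s) p.1 + A₁ ⟨(R1 s) p.1, h1⟩ = p.1 ∧
          (s : ℂ) • (R2 s) p.2.1 + A₂ ⟨(R2 s) p.2.1, h2⟩ = p.2.1 ∧
          (R1 s) p.1 + ((s : ℂ) • (-(R1 s) ((R3 s) p.1) + (R3 s) p.2.2) +
            A₃ ⟨-(R1 s) ((R3 s) p.1) + (R3 s) p.2.2, h3⟩) = p.2.2)) ∧
    -- ... and `Λ₃` is a positive operator on `X × X × X`: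
    Dense {p : X × X × X | p.1 ∈ A₁.domain ∧ p.2.1 ∈ A₂.domain ∧ p.2.2 ∈ A₃.domain} ∧
    IsClosed {q : (X × X × X) × (X × X × X) |
      ∃ (hu : q.1.1 ∈ A₁.domain) (hv : q.1.2.1 ∈ A₂.domain) (hw : q.1.2.2 ∈ A₃.domain),
        q.2 = (A₁ ⟨q.1.1, hu⟩, A₂ ⟨q.1.2.1, hv⟩, q.1.1 + A₃ ⟨q.1.2.2, hw⟩)} ∧
    (∃ M' : ℝ, 1 ≤ M' ∧ ∀ s : ℝ, 0 ≤ s → (1 + s) * ‖invL3 R1 R2 R3 s‖ ≤ M') ∧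
    -- (2) the fractional powers of `Λ₃`:
    (∀ α : ℝ, α ∈ Ioo (0 : ℝ) 1 →
      IntegrableOn (fun s : ℝ => s ^ (-α) • invL3 R1 R2 R3 s) (Ioi 0) ∧
      ∀ p : X × X × X,
        ((Real.sin (π * α) / π) • ∫ s in Ioi (0 : ℝ), s ^ (-α) • invL3 R1 R2 R3 s) p
          = (negPow R1 α p.1, negPow R2 α p.2.1,
              C (negPow R1 α p.1 - negPow R3 α p.1) + negPow R3 α p.2.2)) :=
  stmt19_general M₁ M₂ M₃ A₁ A₂ A₃ R1 R2 R3 hA₁ hA₂ hA₃ hdom13 C ha hb hc
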